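/- arXiv:2308.06864 — 2 statements merged into one kernel-verified Lean document; each statement's English description precedes it below -/
import Mathlib

section
/- Let H be a Hilbert space, Q an orthogonal projection on H, and M a bounded operator on H such that (Q M* Q)(Q M Q) = Q on Q H and Q − (Q M Q)(Q M* Q) is a rank-one orthogonal projection on Q H. Then Q M Q is a Fredholm operator on Q H with index −1. -/
open ContinuousLinearMap

/-- Let `Q` be an orthogonal projection on `H` with range `K = QH`, and `M` a
bounded operator. If the compressions `T = QMQ` and `T' = QM*Q` (viewed as
operators on `K`) satisfy `T'T = 1` on `K` and `1 − TT'` is a rank-one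
orthogonal projection on `K`, then `T = QMQ` is a Fredholm operator on `QH`
with index `dim ker − dim coker = −1`. -/
theorem stmt_2
    {H : Type*} [NormedAddCommGroup H] [InnerProductSpace ℂ H] [CompleteSpace H]
    (Q M : H →L[ℂ] H)
    (hQproj : IsSelfAdjoint Q ∧ Q ∘L Q = Q)
    (K : Submodule ℂ H) (hK : K = LinearMap.range (Q : H →ₗ[ℂ] H))
    [CompleteSpace K]
    (T T' : K →L[ℂ] K)
    (hT : ∀ x : K, (T x : H) = Q (M (x : H)))
    (hT' : ∀ x : K, (T' x : H) = Q ((adjoint M) (x : H)))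
    (hleft : T' ∘L T = 1)
    (hrank1 : ∃ e : K, ‖e‖ = 1 ∧ 1 - T ∘L T' = (innerSL ℂ e).smulRight e) :
    FiniteDimensional ℂ (LinearMap.ker (T : K →ₗ[ℂ] K))
    ∧ FiniteDimensional ℂ (K ⧸ LinearMap.range (T : K →ₗ[ℂ] K))
    ∧ (Module.finrank ℂ (LinearMap.ker (T : K →ₗ[ℂ] K)) : ℤ) -
        (Module.finrank ℂ (K ⧸ LinearMap.range (T : K →ₗ[ℂ] K)) : ℤ) = -1 := by
  obtain ⟨e, he1, hP⟩ := hrank1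
  have hene : e ≠ 0 := by
    intro h; rw [h, norm_zero] at he1; norm_num at he1
  have hleft' : ∀ x : K, T' (T x) = x := by
    intro x
    have := ContinuousLinearMap.ext_iff.mp hleft x
    simpa using this
  have hTT' : ∀ x : K, x - T (T' x) = (inner ℂ e x : ℂ) • e := by
    intro x
    have := ContinuousLinearMap.ext_iff.mp hP x
    simpa [ContinuousLinearMap.sub_apply] using this
  have horth : ∀ x : K, (inner ℂ e (T x) : ℂ) = 0 := by
    intro x
    have h := hTT' (T x)
    rw [hleft' x, sub_self] at h
    rcases smul_eq_zero.mp h.symm with h' | h'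
    · exact h'
    · exact absurd h' hene
  have hker : LinearMap.ker (T : K →ₗ[ℂ] K) = ⊥ := by
    rw [LinearMap.ker_eq_bot]
    intro x y hxy
    rw [← hleft' x, ← hleft' y, ← ContinuousLinearMap.coe_coe T, hxy]
  have hrange : LinearMap.range (T : K →ₗ[ℂ] K) = (ℂ ∙ e)ᗮ := by
    ext y
    simp only [LinearMap.mem_range, Submodule.mem_orthogonal,
      ContinuousLinearMap.coe_coe]
    constructor
    · rintro ⟨x, rfl⟩ u hu
      rw [Submodule.mem_span_singleton] at hu
      obtain ⟨c, rfl⟩ := hu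
      rw [inner_smul_left, horth x, mul_zero]
    · intro hy
      refine ⟨T' y, ?_⟩
      have h := hTT' y
      rw [hy e (Submodule.mem_span_singleton_self e), zero_smul,
        sub_eq_zero] at h
      exact h.symm
  haveI : FiniteDimensional ℂ (LinearMap.ker (T : K →ₗ[ℂ] K)) := by
    rw [hker]; infer_instance
  have hcompl : IsCompl ((ℂ ∙ e)ᗮ) (ℂ ∙ e) :=
    (Submodule.isCompl_orthogonal_of_hasOrthogonalProjection).symm
  have hquot : Module.finrank ℂ (K ⧸ LinearMap.range (T : K →ₗ[ℂ] K)) = 1 := by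
    rw [hrange]
    have equiv := Submodule.quotientEquivOfIsCompl _ _ hcompl
    rw [equiv.finrank_eq]
    exact finrank_span_singleton hene
  haveI : FiniteDimensional ℂ (K ⧸ LinearMap.range (T : K →ₗ[ℂ] K)) := by
    rw [hrange]
    exact FiniteDimensional.of_finrank_eq_succ
      (by
        have equiv := Submodule.quotientEquivOfIsCompl _ _ hcompl
        rw [equiv.finrank_eq]
        exact finrank_span_singleton hene)
  refine ⟨inferInstance, inferInstance, ?_⟩
  have hk0 : Module.finrank ℂ (LinearMap.ker (T : K →ₗ[ℂ] K)) = 0 := by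
    rw [hker]; exact finrank_bot ℂ K
  rw [hk0, hquot]
  norm_num
end

section
/- Let T be a bounded operator on a Hilbert space H and T' a bounded operator such that T T' − 1 and T' T − 1 are both finite rank. Then T is Fredholm and index(T) = tr(T T' − T' T). -/
open ContinuousLinearMap

local notation "⟪" x ", " y "⟫" => @inner ℂ _ _ x y

private lemma fedosov_trace_aux {H : Type*} [NormedAddCommGroup H] [InnerProductSpace ℂ H]
    [CompleteSpace H] {ι : Type} (e : HilbertBasis ι ℂ H) (A G : H →L[ℂ] H)
    (W : Submodule ℂ H) [FiniteDimensional ℂ W] (hG : ∀ x, G x ∈ W) :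
    HasSum (fun i => ⟪e i, A (G (e i))⟫)
      (∑ j, ⟪(ContinuousLinearMap.adjoint G) ((stdOrthonormalBasis ℂ W) j : H),
          A ((stdOrthonormalBasis ℂ W) j : H)⟫) := by
  set b := stdOrthonormalBasis ℂ W with hb
  have hrep : ∀ y : H, G y = ∑ j, ⟪(ContinuousLinearMap.adjoint G) (b j : H), y⟫ • (b j : H) := by
    intro y
    have h1 : (⟨G y, hG y⟩ : W) = ∑ j, ⟪(b j : H), G y⟫ • b j := by
      conv_lhs => rw [← b.sum_repr ⟨G y, hG y⟩]
      refine Finset.sum_congr rfl fun j _ => ?_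
      rw [b.repr_apply_apply]
      rw [Submodule.coe_inner]
    have h2 := congrArg (Submodule.subtype W) h1
    simp only [Submodule.subtype_apply, map_sum, map_smul] at h2
    rw [h2]
    refine Finset.sum_congr rfl fun j _ => ?_
    rw [ContinuousLinearMap.adjoint_inner_left]
  have key : (fun i => ⟪e i, A (G (e i))⟫) =
      fun i => ∑ j, ⟪(ContinuousLinearMap.adjoint G) (b j : H), e i⟫ * ⟪e i, A (b j : H)⟫ := by
    funext i
    conv_lhs => rw [hrep (e i)]
    rw [map_sum, inner_sum]
    refine Finset.sum_congr rfl fun j _ => ?_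
    rw [map_smul, inner_smul_right]
  rw [key]
  exact hasSum_sum fun j _ => e.hasSum_inner_mul_inner _ _

set_option maxHeartbeats 1600000 in
/-- Fedosov's formula: if `T'` is a parametrix of `T` with `TT' − 1` and
`T'T − 1` of finite rank, then `T` is Fredholm (finite-dimensional kernel and
cokernel) and `index T = dim ker T − dim coker T = tr(TT' − T'T)`, the trace
being computed as `∑ᵢ ⟨eᵢ, (TT' − T'T) eᵢ⟩` in any Hilbert basis. -/
theorem stmt_3
    {H : Type*} [NormedAddCommGroup H] [InnerProductSpace ℂ H] [CompleteSpace H]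
    (T T' : H →L[ℂ] H)
    (h1 : FiniteDimensional ℂ (LinearMap.range ((T ∘L T' - 1 : H →L[ℂ] H) : H →ₗ[ℂ] H)))
    (h2 : FiniteDimensional ℂ (LinearMap.range ((T' ∘L T - 1 : H →L[ℂ] H) : H →ₗ[ℂ] H))) :
    FiniteDimensional ℂ (LinearMap.ker (T : H →ₗ[ℂ] H))
    ∧ FiniteDimensional ℂ (H ⧸ LinearMap.range (T : H →ₗ[ℂ] H))
    ∧ ∀ (ι : Type) (e : HilbertBasis ι ℂ H),
        HasSum (fun i => (inner ℂ (e i) ((T ∘L T' - T' ∘L T) (e i)) : ℂ))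
          (((Module.finrank ℂ (LinearMap.ker (T : H →ₗ[ℂ] H)) : ℤ) -
            (Module.finrank ℂ (H ⧸ LinearMap.range (T : H →ₗ[ℂ] H)) : ℤ) : ℤ) : ℂ) := by
  classical
  -- the kernel is finite dimensional
  have hker : FiniteDimensional ℂ (LinearMap.ker (T : H →ₗ[ℂ] H)) := by
    haveI := h2
    refine Submodule.finiteDimensional_of_le
      (S₂ := LinearMap.range ((T' ∘L T - 1 : H →L[ℂ] H) : H →ₗ[ℂ] H)) ?_
    intro x hx
    have hx' : T x = 0 := hx
    exact ⟨-x, by simp [hx']⟩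
  set R : Submodule ℂ H := LinearMap.range (T : H →ₗ[ℂ] H) with hRdef
  have hmemR : ∀ x, T x ∈ R := fun x => ⟨x, rfl⟩
  set V : Submodule ℂ H := LinearMap.ker ((T ∘L T' - 1 : H →L[ℂ] H) : H →ₗ[ℂ] H) with hVdef
  have hVR : V ≤ R := by
    intro x hx
    have hx' : T (T' x) - x = 0 := hx
    exact ⟨T' x, by rw [← sub_eq_zero]; exact hx'⟩
  have hVfd : FiniteDimensional ℂ (H ⧸ V) := by
    haveI := h1
    exact (LinearMap.quotKerEquivRange
      ((T ∘L T' - 1 : H →L[ℂ] H) : H →ₗ[ℂ] H)).symm.finiteDimensional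
  have hVclosed : IsClosed (V : Set H) := by
    have : (V : Set H) = (fun x => T (T' x) - x) ⁻¹' {0} := by
      ext x
      simp [hVdef, LinearMap.mem_ker]
    rw [this]
    exact isClosed_singleton.preimage (by fun_prop)
  -- the cokernel is finite dimensional
  have hcoker : FiniteDimensional ℂ (H ⧸ R) := by
    haveI := hVfd
    have hsurj : Function.Surjective
        (Submodule.mapQ V R LinearMap.id (fun x hx => hVR hx)) := by
      intro z
      obtain ⟨x, rfl⟩ := Submodule.Quotient.mk_surjective R z
      exact ⟨Submodule.Quotient.mk x, by simp [Submodule.mapQ_apply]⟩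
    exact Module.Finite.of_surjective _ hsurj
  -- the range is closed
  have hRclosed : IsClosed (R : Set H) := by
    haveI : IsClosed (V : Set H) := hVclosed
    haveI := hVfd
    have hcont : Continuous V.mkQ :=
      AddMonoidHomClass.continuous_of_bound V.mkQ 1
        (fun x => by simpa using Submodule.Quotient.norm_mk_le V x)
    have hpre : (R : Set H) = V.mkQ ⁻¹' ((R.map V.mkQ : Submodule ℂ (H ⧸ V)) : Set (H ⧸ V)) := by
      ext x
      constructor
      · exact fun hx => ⟨x, hx, rfl⟩
      · rintro ⟨y, hy, hxy⟩
        have hxv : x - y ∈ V := by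
          rw [← Submodule.Quotient.eq]
          exact hxy.symm
        have hxe : x = (x - y) + y := by abel
        rw [hxe]
        exact R.add_mem (hVR hxv) hy
    rw [hpre]
    exact (Submodule.closed_of_finiteDimensional _).preimage hcont
  refine ⟨hker, hcoker, ?_⟩
  -- instances
  haveI : CompleteSpace R := hRclosed.completeSpace_coe
  set K : Submodule ℂ H := LinearMap.ker (T : H →ₗ[ℂ] H) with hKdef
  haveI : FiniteDimensional ℂ K := hker
  haveI : CompleteSpace K := FiniteDimensional.complete ℂ K
  haveI : CompleteSpace Kᗮ := K.isClosed_orthogonal.completeSpace_coe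
  -- the pseudo-inverse `S`
  set f : Kᗮ →L[ℂ] R := (T ∘L Kᗮ.subtypeL).codRestrict R (fun x => hmemR x) with hfdef
  have hf_apply : ∀ x : Kᗮ, ((f x : R) : H) = T (x : H) := fun x => rfl
  have hfker : LinearMap.ker (f : Kᗮ →ₗ[ℂ] R) = ⊥ := by
    rw [Submodule.eq_bot_iff]
    intro x hx
    have h0 : T (x : H) = 0 := by
      rw [← hf_apply x, (show f x = 0 from LinearMap.mem_ker.mp hx), ZeroMemClass.coe_zero]
    have hxK : (x : H) ∈ K := h0
    have h01 : ⟪(x : H), (x : H)⟫ = 0 :=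
      (Submodule.mem_orthogonal K (x : H)).mp x.2 (x : H) hxK
    exact Subtype.ext (inner_self_eq_zero.mp h01)
  have hfrange : LinearMap.range (f : Kᗮ →ₗ[ℂ] R) = ⊤ := by
    rw [LinearMap.range_eq_top]
    rintro ⟨y, hy⟩
    obtain ⟨x, rfl⟩ := hy
    have hx : x ∈ K ⊔ Kᗮ := by rw [Submodule.sup_orthogonal_of_hasOrthogonalProjection]; trivial
    obtain ⟨v, hv, w, hw, rfl⟩ := Submodule.mem_sup.mp hx
    refine ⟨⟨w, hw⟩, ?_⟩
    apply Subtype.ext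
    have hv0 : T v = 0 := hv
    simp [hf_apply, map_add, hv0]
  set eqv : Kᗮ ≃L[ℂ] R := ContinuousLinearEquiv.ofBijective f hfker hfrange with heqvdef
  have heqv_apply : ∀ x : Kᗮ, eqv x = f x := fun x => rfl
  set S : H →L[ℂ] H := Kᗮ.subtypeL ∘L (eqv.symm : R →L[ℂ] Kᗮ) ∘L Submodule.orthogonalProjectionOnto R
    with hSdef
  have hTS : ∀ y : H, T (S y) = (Submodule.orthogonalProjectionOnto R y : H) := by
    intro y
    have h1 : T (S y) = ((f (eqv.symm (Submodule.orthogonalProjectionOnto R y)) : R) : H) := rfl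
    rw [h1, ← heqv_apply, eqv.apply_symm_apply]
  have hST : ∀ x : H, S (T x) = (Submodule.orthogonalProjectionOnto Kᗮ x : H) := by
    intro x
    have hdec : ((Submodule.orthogonalProjectionOnto K x : K) : H) + ((Submodule.orthogonalProjectionOnto Kᗮ x : Kᗮ) : H) = x :=
      Submodule.starProjection_add_starProjection_orthogonal (K := K) x
    set w : Kᗮ := Submodule.orthogonalProjectionOnto Kᗮ x with hw
    have hTx : T x = ((f w : R) : H) := by
      rw [hf_apply]
      conv_lhs => rw [← hdec]
      have h0 : T ((Submodule.orthogonalProjectionOnto K x : K) : H) = 0 :=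
        (Submodule.orthogonalProjectionOnto K x).2
      rw [map_add, h0, zero_add]
    show (((eqv.symm (Submodule.orthogonalProjectionOnto R (T x)) : Kᗮ)) : H) = (w : H)
    rw [hTx, Submodule.orthogonalProjectionOnto_mem_subspace_eq_self (f w), ← heqv_apply,
      eqv.symm_apply_apply]
  -- the orthogonal complement of the range
  haveI hRperp_fd : FiniteDimensional ℂ (Rᗮ : Submodule ℂ H) := by
    haveI := hcoker
    exact (Submodule.quotientEquivOfIsCompl R Rᗮ
      R.isCompl_orthogonal_of_hasOrthogonalProjection).finiteDimensional
  have hfrk : Module.finrank ℂ (H ⧸ R) = Module.finrank ℂ Rᗮ :=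
    (Submodule.quotientEquivOfIsCompl R Rᗮ R.isCompl_orthogonal_of_hasOrthogonalProjection).finrank_eq
  -- the finite-rank remainder `F`
  set F : H →L[ℂ] H := T' - S with hFdef
  set W : Submodule ℂ H := LinearMap.range ((T' ∘L T - 1 : H →L[ℂ] H) : H →ₗ[ℂ] H)
      ⊔ Submodule.map (T' : H →ₗ[ℂ] H) Rᗮ with hWdef
  haveI : FiniteDimensional ℂ (Submodule.map (T' : H →ₗ[ℂ] H) Rᗮ) :=
    Module.Finite.map _ _
  haveI := h2
  haveI : FiniteDimensional ℂ W := Submodule.finiteDimensional_sup _ _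
  have hFW : ∀ x, F x ∈ W := by
    intro x
    have hFx : F x = (T' ∘L T - 1) (S x) + T' (x - T (S x)) := by
      simp only [hFdef, sub_apply, comp_apply, one_apply, map_sub]
      abel
    rw [hFx]
    refine W.add_mem (Submodule.mem_sup_left ⟨S x, rfl⟩) (Submodule.mem_sup_right ?_)
    refine Submodule.mem_map_of_mem ?_
    rw [hTS]
    exact Submodule.sub_starProjection_mem_orthogonal x
  intro ι e
  -- the four trace computations
  have hsum1 := fedosov_trace_aux e 1 (K.subtypeL ∘L Submodule.orthogonalProjectionOnto K) K
    (fun x => (Submodule.orthogonalProjectionOnto K x).2)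
  have hsum2 := fedosov_trace_aux e 1 (Rᗮ.subtypeL ∘L Submodule.orthogonalProjectionOnto Rᗮ) Rᗮ
    (fun x => (Submodule.orthogonalProjectionOnto Rᗮ x).2)
  have hsum3 := fedosov_trace_aux e T F W hFW
  have hsum4 := fedosov_trace_aux e 1 (F ∘L T) W (fun x => hFW (T x))
  -- values of the projection traces
  have hval1 : ∀ (U : Submodule ℂ H) (inst : FiniteDimensional ℂ U) (instc : CompleteSpace U),
      (∑ j, ⟪(ContinuousLinearMap.adjoint (U.subtypeL ∘L Submodule.orthogonalProjectionOnto U))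
          ((stdOrthonormalBasis ℂ U) j : H),
          (1 : H →L[ℂ] H) ((stdOrthonormalBasis ℂ U) j : H)⟫)
        = (Module.finrank ℂ U : ℂ) := by
    intro U inst instc
    have : ∀ j, ⟪(ContinuousLinearMap.adjoint (U.subtypeL ∘L Submodule.orthogonalProjectionOnto U))
        ((stdOrthonormalBasis ℂ U) j : H),
        (1 : H →L[ℂ] H) ((stdOrthonormalBasis ℂ U) j : H)⟫ = 1 := by
      intro j
      rw [ContinuousLinearMap.one_apply, ContinuousLinearMap.adjoint_inner_left]
      have hGb : (U.subtypeL ∘L Submodule.orthogonalProjectionOnto U) ((stdOrthonormalBasis ℂ U) j : H)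
          = ((stdOrthonormalBasis ℂ U) j : H) := by
        simp [Submodule.orthogonalProjectionOnto_mem_subspace_eq_self]
      have hn : ‖((stdOrthonormalBasis ℂ U) j : H)‖ = 1 :=
        (stdOrthonormalBasis ℂ U).orthonormal.1 j
      simp [hGb, inner_self_eq_norm_sq_to_K, hn]
    rw [Finset.sum_congr rfl (fun j _ => this j)]
    simp
  have hv1 := hval1 K inferInstance inferInstance
  have hv2 := hval1 Rᗮ inferInstance inferInstance
  rw [hv1] at hsum1
  rw [hv2] at hsum2
  -- the two commutator traces agree
  have hval34 : (∑ j, ⟪(ContinuousLinearMap.adjoint (F ∘L T))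
        ((stdOrthonormalBasis ℂ W) j : H),
        (1 : H →L[ℂ] H) ((stdOrthonormalBasis ℂ W) j : H)⟫)
      = (∑ j, ⟪(ContinuousLinearMap.adjoint F) ((stdOrthonormalBasis ℂ W) j : H),
        T ((stdOrthonormalBasis ℂ W) j : H)⟫) := by
    refine Finset.sum_congr rfl fun j _ => ?_
    rw [ContinuousLinearMap.one_apply, ContinuousLinearMap.adjoint_comp, comp_apply,
      ContinuousLinearMap.adjoint_inner_left]
  rw [hval34] at hsum4
  -- assemble
  have hcomb := (hsum1.sub hsum2).add (hsum3.sub hsum4)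
  have hfun : (fun i => (inner ℂ (e i) ((T ∘L T' - T' ∘L T) (e i)) : ℂ)) =
      fun i => ((⟪e i, (1 : H →L[ℂ] H) ((K.subtypeL ∘L Submodule.orthogonalProjectionOnto K) (e i))⟫
          - ⟪e i, (1 : H →L[ℂ] H) ((Rᗮ.subtypeL ∘L Submodule.orthogonalProjectionOnto Rᗮ) (e i))⟫)
        + (⟪e i, T (F (e i))⟫ - ⟪e i, (1 : H →L[ℂ] H) ((F ∘L T) (e i))⟫)) := by
    funext i
    set x : H := e i with hx
    have hT' : ∀ y, T' y = S y + F y := by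
      intro y
      simp [hFdef]
    have harg : (T ∘L T' - T' ∘L T) x
        = (((Submodule.orthogonalProjectionOnto K x : K) : H) - ((Submodule.orthogonalProjectionOnto Rᗮ x : Rᗮ) : H))
          + (T (F x) - F (T x)) := by
      have e1 : T (T' x) = ((Submodule.orthogonalProjectionOnto R x : R) : H) + T (F x) := by
        rw [hT' x, map_add, hTS]
      have e2 : T' (T x) = ((Submodule.orthogonalProjectionOnto Kᗮ x : Kᗮ) : H) + F (T x) := by
        rw [hT' (T x), hST]
      have e3 : ((Submodule.orthogonalProjectionOnto Kᗮ x : Kᗮ) : H)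
          = x - ((Submodule.orthogonalProjectionOnto K x : K) : H) :=
        Submodule.starProjection_orthogonal_val x
      have e4 : ((Submodule.orthogonalProjectionOnto Rᗮ x : Rᗮ) : H)
          = x - ((Submodule.orthogonalProjectionOnto R x : R) : H) :=
        Submodule.starProjection_orthogonal_val x
      rw [sub_apply, comp_apply, comp_apply, e1, e2, e3, e4]
      abel
    rw [harg]
    simp only [ContinuousLinearMap.one_apply, comp_apply, Submodule.subtypeL_apply, inner_add_right,
      inner_sub_right]
  rw [hfun]
  have hvalue : (((Module.finrank ℂ (LinearMap.ker (T : H →ₗ[ℂ] H)) : ℤ) -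
      (Module.finrank ℂ (H ⧸ LinearMap.range (T : H →ₗ[ℂ] H)) : ℤ) : ℤ) : ℂ)
      = ((Module.finrank ℂ K : ℂ) - (Module.finrank ℂ Rᗮ : ℂ))
        + ((∑ j, ⟪(ContinuousLinearMap.adjoint F) ((stdOrthonormalBasis ℂ W) j : H),
            T ((stdOrthonormalBasis ℂ W) j : H)⟫)
          - (∑ j, ⟪(ContinuousLinearMap.adjoint F) ((stdOrthonormalBasis ℂ W) j : H),
            T ((stdOrthonormalBasis ℂ W) j : H)⟫)) := by
    rw [sub_self, add_zero, ← hKdef, ← hRdef, hfrk]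
    push_cast
    ring
  rw [hvalue]
  exact hcomb
end
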